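/- arXiv:2012.15239 — 2 statements merged into one kernel-verified Lean document; each statement's English description precedes it below -/
import Mathlib

section
/- Let $f : [0,\infty) \to (0,1]$ be non-increasing, logarithmically superadditive and decay faster than any polynomial. Fix $R > 1$ and $d \in \mathbb{N}$, and define $f_j(s) := f(s)^{1/(5R^2)^j}$ for $j \in \mathbb{N}$. Then for all $j \in \mathbb{N}$ and uniformly in $\alpha, \beta \in [1/R, R]$: $\lim_{N \to \infty} \frac{\sum_{k = \lfloor N/2 \rfloor}^{\infty} (k+1)^{d+1} f_j(k)^{\alpha}}{f_{j+1}(N)^{\beta}} = 0$, provided $\sum_{k=0}^\infty (k+1)^{d+1} f_j(k)^{1/(2R)} < \infty$ for each $j$. -/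
/-!
Write `m = ⌊N/2⌋` and `c = (5R²)^{-j}`. Since `α ≥ 1/R` and `f ≤ 1`, every term of the tail is at
most `f(m)^{c/(2R)}` times the corresponding term of the convergent series `∑ (k+1)^{d+1} f(k)^{c/(2R)}`.
Log-superadditivity gives `f(N) ≥ f(2m+1) ≥ f(m)² f(1)`, and `β ≤ R` gives
`f_{j+1}(N)^β ≥ f(N)^{c/(5R)} ≥ f(m)^{2c/(5R)} f(1)^{c/(5R)}`. The quotient is therefore
`O(f(m)^{c/(2R) - 2c/(5R)}) = O(f(m)^{c/(10R)})`, which tends to `0` because `f` does.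
-/

open Filter Topology

lemma tsum_shift_mul_rpow_le {u w : ℕ → ℝ} (hu : ∀ k, 0 < u k) (hu1 : ∀ k, u k ≤ 1)
    (hanti : Antitone u) (hw : ∀ k, 0 ≤ w k) {a e : ℝ} (ha : 0 ≤ a) (hae : 2 * a ≤ e)
    (hs : Summable fun k => w k * u k ^ a) (m : ℕ) :
    ∑' k, w (k + m) * u (k + m) ^ e ≤ u m ^ a * ∑' k, w k * u k ^ a := by
  set g : ℕ → ℝ := fun k => w k * u k ^ a
  have hg : ∀ k, 0 ≤ g k := fun k => mul_nonneg (hw k) (Real.rpow_nonneg (hu k).le a)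
  have hterm : ∀ k, w (k + m) * u (k + m) ^ e ≤ u m ^ a * g (k + m) := fun k =>
    calc w (k + m) * u (k + m) ^ e
        ≤ w (k + m) * u (k + m) ^ (a + a) :=
          mul_le_mul_of_nonneg_left
            (Real.rpow_le_rpow_of_exponent_ge (hu _) (hu1 _) (by linarith)) (hw _)
      _ = u (k + m) ^ a * g (k + m) := by
          rw [Real.rpow_add (hu _)]
          ring
      _ ≤ u m ^ a * g (k + m) :=
          mul_le_mul_of_nonneg_right
            (Real.rpow_le_rpow (hu _).le (hanti (Nat.le_add_left m k)) ha) (hg _)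
  have hshift : Summable fun k => u m ^ a * g (k + m) :=
    (hs.comp_injective (add_left_injective m)).mul_left _
  have hlhs : Summable fun k => w (k + m) * u (k + m) ^ e :=
    hshift.of_nonneg_of_le (fun k => mul_nonneg (hw _) (Real.rpow_nonneg (hu _).le e)) hterm
  calc ∑' k, w (k + m) * u (k + m) ^ e
      ≤ ∑' k, u m ^ a * g (k + m) := hlhs.tsum_le_tsum hterm hshift
    _ = u m ^ a * ∑' k, g (k + m) := tsum_mul_left
    _ ≤ u m ^ a * ∑' k, g k :=
        mul_le_mul_of_nonneg_left (tsum_comp_le_tsum_of_inj hs hg (add_left_injective m))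
          (Real.rpow_nonneg (hu m).le a)

lemma sq_mul_le_of_mul_le_add {f : ℝ → ℝ} (hnonneg : ∀ r, 0 ≤ r → 0 ≤ f r)
    (hlog : ∀ r s, 0 ≤ r → 0 ≤ s → f r * f s ≤ f (r + s)) {r : ℝ} (hr : 0 ≤ r) :
    f r ^ 2 * f 1 ≤ f (2 * r + 1) :=
  calc f r ^ 2 * f 1 = f r * (f r * f 1) := by ring
    _ ≤ f r * f (r + 1) := mul_le_mul_of_nonneg_left (hlog r 1 hr zero_le_one) (hnonneg r hr)
    _ ≤ f (r + (r + 1)) := hlog r (r + 1) hr (by linarith)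
    _ = f (2 * r + 1) := by ring_nf

lemma tsum_tail_div_le {f : ℝ → ℝ} (hpos : ∀ r, 0 ≤ r → 0 < f r) (hle1 : ∀ r, 0 ≤ r → f r ≤ 1)
    (hmono : ∀ r s, 0 ≤ r → r ≤ s → f s ≤ f r)
    (hlog : ∀ r s, 0 ≤ r → 0 ≤ s → f r * f s ≤ f (r + s)) {c R : ℝ} (hc : 0 < c) (hR : 0 < R)
    (d : ℕ) (hsum : Summable fun k : ℕ => ((k : ℝ) + 1) ^ (d + 1) * f k ^ (c / (2 * R)))
    (N : ℕ) {α β : ℝ} (hα : 1 / R ≤ α) (hβ : β ≤ R) :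
    (∑' k : ℕ, (((k + N / 2 : ℕ) : ℝ) + 1) ^ (d + 1) * (f ((k + N / 2 : ℕ) : ℝ) ^ c) ^ α) /
        (f N ^ (c / (5 * R ^ 2))) ^ β ≤
      f (N / 2 : ℕ) ^ (c / (10 * R)) *
        ((∑' k : ℕ, ((k : ℝ) + 1) ^ (d + 1) * f k ^ (c / (2 * R))) / f 1 ^ (c / (5 * R))) := by
  set m := N / 2
  set S := ∑' k : ℕ, ((k : ℝ) + 1) ^ (d + 1) * f k ^ (c / (2 * R))
  have hfm : 0 < f m := hpos m m.cast_nonneg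
  have hfN : 0 < f N := hpos N N.cast_nonneg
  have hf1 : 0 < f 1 := hpos 1 zero_le_one
  have hS : 0 ≤ S := tsum_nonneg fun k => by have := hpos k k.cast_nonneg; positivity
  have hnum : ∑' k : ℕ, (((k + m : ℕ) : ℝ) + 1) ^ (d + 1) * (f ((k + m : ℕ) : ℝ) ^ c) ^ α ≤
      f m ^ (c / (2 * R)) * S := by
    simp_rw [← Real.rpow_mul (hpos _ (Nat.cast_nonneg _)).le]
    refine tsum_shift_mul_rpow_le (u := fun k : ℕ => f k) (w := fun k : ℕ => ((k : ℝ) + 1) ^ (d + 1))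
      (fun k => hpos k k.cast_nonneg) (fun k => hle1 k k.cast_nonneg)
      (fun k l hkl => hmono k l k.cast_nonneg (Nat.cast_le.mpr hkl)) (fun k => by positivity)
      (by positivity) ?_ hsum m
    calc 2 * (c / (2 * R)) = c * (1 / R) := by field_simp
      _ ≤ c * α := mul_le_mul_of_nonneg_left hα hc.le
  have hden : (f m ^ 2 * f 1) ^ (c / (5 * R)) ≤ (f N ^ (c / (5 * R ^ 2))) ^ β := by
    have hN : f m ^ 2 * f 1 ≤ f N :=
      (sq_mul_le_of_mul_le_add (fun r hr => (hpos r hr).le) hlog m.cast_nonneg).trans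
        (hmono N _ N.cast_nonneg (by norm_cast; omega))
    have hexp : c / (5 * R ^ 2) * β ≤ c / (5 * R) :=
      calc c / (5 * R ^ 2) * β ≤ c / (5 * R ^ 2) * R := by gcongr
        _ = c / (5 * R) := by field_simp
    rw [← Real.rpow_mul hfN.le]
    exact (Real.rpow_le_rpow (by positivity) hN (by positivity)).trans
      (Real.rpow_le_rpow_of_exponent_ge hfN (hle1 N N.cast_nonneg) hexp)
  have hsplit : f m ^ (c / (2 * R)) = (f m ^ 2) ^ (c / (5 * R)) * f m ^ (c / (10 * R)) := by
    rw [← Real.rpow_natCast, ← Real.rpow_mul hfm.le, ← Real.rpow_add hfm]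
    congr 1
    field_simp
    ring
  calc _ ≤ f m ^ (c / (2 * R)) * S / (f m ^ 2 * f 1) ^ (c / (5 * R)) :=
        div_le_div₀ (by positivity) hnum (by positivity) hden
    _ = f m ^ (c / (10 * R)) * (S / f 1 ^ (c / (5 * R))) := by
        rw [hsplit, Real.mul_rpow (by positivity) hf1.le]
        field_simp

theorem stmt6 (f : ℝ → ℝ) (R : ℝ) (d : ℕ)
    (hpos : ∀ r, 0 ≤ r → 0 < f r) (hle1 : ∀ r, 0 ≤ r → f r ≤ 1)
    (hmono : ∀ r s, 0 ≤ r → r ≤ s → f s ≤ f r)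
    (hlog : ∀ r s, 0 ≤ r → 0 ≤ s → f r * f s ≤ f (r + s))
    (hdecay : ∀ n : ℕ, Filter.Tendsto (fun r : ℝ => r ^ n * f r) Filter.atTop (nhds 0))
    (hR : 1 < R)
    (hsum : ∀ j : ℕ, 1 ≤ j → Summable (fun k : ℕ =>
      ((k : ℝ) + 1) ^ (d + 1) * f k ^ (((5 * R ^ 2) ^ j)⁻¹ / (2 * R)))) :
    ∀ j : ℕ, 1 ≤ j → ∀ ε > 0, ∃ N₀ : ℕ, ∀ N ≥ N₀, ∀ α β : ℝ,
      α ∈ Set.Icc (1 / R) R → β ∈ Set.Icc (1 / R) R →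
      (∑' k : ℕ, (((k + N / 2 : ℕ) : ℝ) + 1) ^ (d + 1) *
          (f ((k + N / 2 : ℕ) : ℝ) ^ ((5 * R ^ 2) ^ j)⁻¹) ^ α) /
        (f (N : ℝ) ^ ((5 * R ^ 2) ^ (j + 1))⁻¹) ^ β < ε := by
  intro j hj ε hε
  have hR0 : 0 < R := by linarith
  set c : ℝ := ((5 * R ^ 2) ^ j)⁻¹
  have hc : 0 < c := by positivity
  set C : ℝ := (∑' k : ℕ, ((k : ℝ) + 1) ^ (d + 1) * f k ^ (c / (2 * R))) / f 1 ^ (c / (5 * R))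
  have hnext : ((5 * R ^ 2) ^ (j + 1))⁻¹ = c / (5 * R ^ 2) := by
    rw [pow_succ, mul_inv, div_eq_mul_inv]
  have hf : Tendsto f atTop (𝓝 0) := by simpa using hdecay 0
  have hlim : Tendsto (fun N : ℕ => f (N / 2 : ℕ) ^ (c / (10 * R)) * C) atTop (𝓝 0) := by
    have hhalf : Tendsto (fun N : ℕ => ((N / 2 : ℕ) : ℝ)) atTop atTop :=
      tendsto_natCast_atTop_atTop.comp (Nat.tendsto_div_const_atTop two_ne_zero)
    have hq : 0 < c / (10 * R) := by positivity
    simpa [Real.zero_rpow hq.ne'] using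
      ((hf.comp hhalf).rpow_const (p := c / (10 * R)) (Or.inr hq.le)).mul_const C
  obtain ⟨N₀, hN₀⟩ := eventually_atTop.mp (hlim.eventually (gt_mem_nhds hε))
  refine ⟨N₀, fun N hN α β hα hβ => lt_of_le_of_lt ?_ (hN₀ N hN)⟩
  rw [hnext]
  exact tsum_tail_div_le hpos hle1 hmono hlog hc hR0 d (hsum j hj) N hα.1 hβ.2
end

section
/- Let $(f_1, f_2)$ be bounded non-increasing functions $[0,\infty) \to (0,\infty)$ tending to zero at infinity with $\sup_{N\in\mathbb{N}} f_1(N - \lfloor N/2 \rfloor)/f_2(N) < \infty$. Let $(E_N)_{N\in\mathbb{N}}$ be a sequence of linear contractions on a Banach space $X$ (each $\|E_N\| \le 1$), and suppose $T : X \to X$ is a linear isometry. Let $X_{f}$ denote the set of $x \in X$ with $\|x\|_f := \|x\| + \sup_N \|(1-E_N)x\|/f(N) < \infty$. Assume there is a constant $C$ with $\|(1 - E_N) T E_k x\| \le C \|x\|\, k^d\, \zeta(N - k)$ for all $k < N$ and $x \in X$, where $\zeta$ is non-increasing with $\sup_N N^d \zeta(\lfloor N/2 \rfloor)/f_2(N)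 < \infty$. Then $T$ maps $X_{f_1}$ boundedly into $X_{f_2}$: there is $C'$ with $\|Tx\|_{f_2} \le C' \|x\|_{f_1}$ for all $x \in X_{f_1}$. -/
/-!
Fix `N ≥ 2` and put `k = N - ⌊N/2⌋`, so that `k < N` and `N - k = ⌊N/2⌋`. Splitting
`x = (x - E_k x) + E_k x`, the first piece contributes at most `2 ‖x - E_k x‖ ≤ 2 ‖x‖_{f₁} f₁(k)`,
which is `O(f₂(N))` by the first compatibility condition, while quasi-locality bounds the second by
`C ‖x‖ k^d ζ(⌊N/2⌋) ≤ |C| ‖x‖ N^d ζ(⌊N/2⌋)`, which is `O(f₂(N))` by the second one.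
For `N ≤ 1` the trivial bound `2 ‖x‖` suffices since `f₂(N) ≥ f₂(1) > 0`.
-/

open Set

section Contraction

variable {𝕜 X : Type*} [NontriviallyNormedField 𝕜] [SeminormedAddCommGroup X] [NormedSpace 𝕜 X]

theorem norm_sub_apply_le_two_mul {P : X →L[𝕜] X} (hP : ‖P‖ ≤ 1) (y : X) :
    ‖y - P y‖ ≤ 2 * ‖y‖ :=
  calc ‖y - P y‖ ≤ ‖y‖ + ‖P y‖ := norm_sub_le _ _
    _ ≤ ‖y‖ + 1 * ‖y‖ := by gcongr; exact P.le_of_opNorm_le hP y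
    _ = 2 * ‖y‖ := by ring

theorem norm_map_sub_apply_le {P Q T : X →L[𝕜] X} (hP : ‖P‖ ≤ 1) (hT : ∀ y, ‖T y‖ ≤ ‖y‖)
    (x : X) : ‖T x - P (T x)‖ ≤ 2 * ‖x - Q x‖ + ‖T (Q x) - P (T (Q x))‖ := by
  have hsplit : T x - P (T x) =
      (T (x - Q x) - P (T (x - Q x))) + (T (Q x) - P (T (Q x))) := by
    simp only [map_sub]
    abel
  rw [hsplit]
  refine (norm_add_le _ _).trans (add_le_add_left ?_ _)
  exact (norm_sub_apply_le_two_mul hP _).trans (by gcongr; exact hT _)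

end Contraction

theorem le_ciSup_div_mul {ι : Type*} {g f : ι → ℝ} (hf : ∀ i, 0 < f i)
    (hg : BddAbove (range fun i => g i / f i)) (i : ι) : g i ≤ (⨆ j, g j / f j) * f i :=
  (div_le_iff₀ (hf i)).mp (le_ciSup hg i)

theorem bddAbove_div_and_ciSup_le_of_le_mul {ι : Type*} [Nonempty ι] {g f : ι → ℝ}
    (hf : ∀ i, 0 < f i) {B : ℝ} (h : ∀ i, g i ≤ B * f i) :
    BddAbove (range fun i => g i / f i) ∧ ⨆ i, g i / f i ≤ B := by
  have hle : ∀ i, g i / f i ≤ B := fun i => (div_le_iff₀ (hf i)).mpr (h i)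
  exact ⟨⟨B, forall_mem_range.mpr hle⟩, ciSup_le hle⟩

section QuasiLocality

variable {X : Type*} [NormedAddCommGroup X] [NormedSpace ℝ X] {d : ℕ} {E : ℕ → X →L[ℝ] X}
  {T : X →L[ℝ] X} {f₁ f₂ ζ : ℕ → ℝ} {C K₁ K₂ S : ℝ} {x : X} {N : ℕ}

theorem norm_map_sub_apply_le_of_two_le (hEN : ‖E N‖ ≤ 1) (hT : ∀ y, ‖T y‖ ≤ ‖y‖)
    (hloc : ∀ k N : ℕ, k < N → ∀ x : X,
      ‖T (E k x) - E N (T (E k x))‖ ≤ C * ‖x‖ * (k : ℝ) ^ d * ζ (N - k))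
    (hζ : 0 ≤ ζ (N / 2)) (hK₁ : f₁ (N - N / 2) ≤ K₁ * f₂ N)
    (hK₂ : (N : ℝ) ^ d * ζ (N / 2) ≤ K₂ * f₂ N)
    (hS : ∀ k, ‖x - E k x‖ ≤ S * f₁ k) (hS₀ : 0 ≤ S) (hN : 2 ≤ N) :
    ‖T x - E N (T x)‖ ≤ (2 * K₁ * S + |C| * K₂ * ‖x‖) * f₂ N := by
  set k := N - N / 2
  have hkN : k < N := by omega
  have hNk : N - k = N / 2 := by omega
  have hlocal : ‖T (E k x) - E N (T (E k x))‖ ≤ |C| * ‖x‖ * ((N : ℝ) ^ d * ζ (N / 2)) :=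
    calc ‖T (E k x) - E N (T (E k x))‖ ≤ C * (‖x‖ * (k : ℝ) ^ d * ζ (N / 2)) := by
          rw [← hNk, ← mul_assoc, ← mul_assoc]; exact hloc k N hkN x
      _ ≤ |C| * (‖x‖ * (k : ℝ) ^ d * ζ (N / 2)) := by gcongr; exact le_abs_self C
      _ ≤ |C| * ‖x‖ * ((N : ℝ) ^ d * ζ (N / 2)) := by
          rw [mul_assoc ‖x‖, ← mul_assoc]; gcongr
  have htail : ‖x - E k x‖ ≤ S * (K₁ * f₂ N) := (hS k).trans (by gcongr)
  calc ‖T x - E N (T x)‖ ≤ 2 * ‖x - E k x‖ + ‖T (E k x) - E N (T (E k x))‖ :=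
        norm_map_sub_apply_le hEN hT x
    _ ≤ 2 * (S * (K₁ * f₂ N)) + |C| * ‖x‖ * (K₂ * f₂ N) := by
        gcongr
        exact hlocal.trans (by gcongr)
    _ = (2 * K₁ * S + |C| * K₂ * ‖x‖) * f₂ N := by ring

theorem norm_map_sub_apply_le_two_div_mul (hEN : ‖E N‖ ≤ 1) (hTx : ‖T x‖ ≤ ‖x‖)
    (hf₂ : 0 < f₂ 1) (hf₂N : f₂ 1 ≤ f₂ N) :
    ‖T x - E N (T x)‖ ≤ 2 / f₂ 1 * ‖x‖ * f₂ N :=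
  calc ‖T x - E N (T x)‖ ≤ 2 * ‖T x‖ := norm_sub_apply_le_two_mul hEN (T x)
    _ ≤ 2 / f₂ 1 * ‖x‖ * f₂ 1 := by field_simp; exact hTx
    _ ≤ 2 / f₂ 1 * ‖x‖ * f₂ N := by gcongr

theorem norm_map_sub_apply_le_mul (hE : ∀ N, ‖E N‖ ≤ 1) (hT : ∀ y, ‖T y‖ ≤ ‖y‖)
    (hf₂pos : ∀ N, 0 < f₂ N) (hζpos : ∀ N, 0 < ζ N) (hf₂mono : ∀ m n, m ≤ n → f₂ n ≤ f₂ m)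
    (hloc : ∀ k N : ℕ, k < N → ∀ x : X,
      ‖T (E k x) - E N (T (E k x))‖ ≤ C * ‖x‖ * (k : ℝ) ^ d * ζ (N - k))
    (hK₁ : ∀ N : ℕ, f₁ (N - N / 2) ≤ K₁ * f₂ N) (hK₁₀ : 0 ≤ K₁)
    (hK₂ : ∀ N : ℕ, (N : ℝ) ^ d * ζ (N / 2) ≤ K₂ * f₂ N) (hK₂₀ : 0 ≤ K₂)
    (hS : ∀ k, ‖x - E k x‖ ≤ S * f₁ k) (hS₀ : 0 ≤ S) (N : ℕ) :
    ‖T x - E N (T x)‖ ≤ ((2 / f₂ 1 + |C| * K₂) * ‖x‖ + 2 * K₁ * S) * f₂ N := by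
  have h₁ : 0 ≤ 2 / f₂ 1 * ‖x‖ := by have := hf₂pos 1; positivity
  have h₂ : 0 ≤ |C| * K₂ * ‖x‖ := by positivity
  have h₃ : 0 ≤ 2 * K₁ * S := by positivity
  rcases le_or_gt N 1 with hN | hN
  · refine (norm_map_sub_apply_le_two_div_mul (hE N) (hT x) (hf₂pos 1)
      (hf₂mono N 1 hN)).trans ?_
    exact mul_le_mul_of_nonneg_right (by linarith) (hf₂pos N).le
  · refine (norm_map_sub_apply_le_of_two_le (hE N) hT hloc (hζpos _).le (hK₁ N) (hK₂ N) hS hS₀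
      hN).trans ?_
    exact mul_le_mul_of_nonneg_right (by linarith) (hf₂pos N).le

end QuasiLocality

theorem stmt13_general {X : Type*} [NormedAddCommGroup X] [NormedSpace ℝ X]
    (d : ℕ) (E : ℕ → X →L[ℝ] X) (hE : ∀ N, ‖E N‖ ≤ 1)
    (T : X →L[ℝ] X) (hT : ∀ x, ‖T x‖ = ‖x‖)
    (f₁ f₂ ζ : ℕ → ℝ)
    (hf₁pos : ∀ N, 0 < f₁ N) (hf₂pos : ∀ N, 0 < f₂ N) (hζpos : ∀ N, 0 < ζ N)
    (hf₂mono : ∀ m n, m ≤ n → f₂ n ≤ f₂ m)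
    (hcompat₁ : ∃ K, ∀ N : ℕ, f₁ (N - N / 2) / f₂ N ≤ K)
    (C : ℝ)
    (hloc : ∀ k N : ℕ, k < N → ∀ x : X,
      ‖T (E k x) - E N (T (E k x))‖ ≤ C * ‖x‖ * (k : ℝ) ^ d * ζ (N - k))
    (hcompat₂ : ∃ K, ∀ N : ℕ, (N : ℝ) ^ d * ζ (N / 2) / f₂ N ≤ K) :
    ∃ C' : ℝ, ∀ x : X,
      BddAbove (Set.range fun N => ‖x - E N x‖ / f₁ N) →
      BddAbove (Set.range fun N => ‖T x - E N (T x)‖ / f₂ N) ∧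
      ‖T x‖ + (⨆ N : ℕ, ‖T x - E N (T x)‖ / f₂ N) ≤
        C' * (‖x‖ + ⨆ N : ℕ, ‖x - E N x‖ / f₁ N) := by
  obtain ⟨K₁, hK₁⟩ := hcompat₁
  obtain ⟨K₂, hK₂⟩ := hcompat₂
  have hK₁₀ : 0 ≤ K₁ := (div_pos (hf₁pos _) (hf₂pos 0)).le.trans (hK₁ 0)
  have hK₂₀ : 0 ≤ K₂ :=
    (div_nonneg (mul_nonneg (by positivity) (hζpos _).le) (hf₂pos 0).le).trans (hK₂ 0)
  refine ⟨1 + (2 / f₂ 1 + |C| * K₂) + 2 * K₁, fun x hx => ?_⟩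
  set S := ⨆ N, ‖x - E N x‖ / f₁ N
  have hS₀ : 0 ≤ S := (div_nonneg (norm_nonneg _) (hf₁pos 0).le).trans (le_ciSup hx 0)
  obtain ⟨hbdd, hsup⟩ := bddAbove_div_and_ciSup_le_of_le_mul hf₂pos
    (norm_map_sub_apply_le_mul hE (fun y => (hT y).le) hf₂pos hζpos hf₂mono hloc
      (fun N => (div_le_iff₀ (hf₂pos N)).mp (hK₁ N)) hK₁₀
      (fun N => (div_le_iff₀ (hf₂pos N)).mp (hK₂ N)) hK₂₀ (le_ciSup_div_mul hf₁pos hx) hS₀)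
  refine ⟨hbdd, ?_⟩
  have ha : 0 ≤ 2 / f₂ 1 + |C| * K₂ := by have := hf₂pos 1; positivity
  rw [hT]
  nlinarith [mul_nonneg ha hS₀, mul_nonneg hK₁₀ (norm_nonneg x)]

theorem stmt13 {X : Type*} [NormedAddCommGroup X] [NormedSpace ℝ X] [CompleteSpace X]
    (d : ℕ) (E : ℕ → X →L[ℝ] X) (hE : ∀ N, ‖E N‖ ≤ 1)
    (T : X →L[ℝ] X) (hT : ∀ x, ‖T x‖ = ‖x‖)
    (f₁ f₂ ζ : ℕ → ℝ)
    (hf₁pos : ∀ N, 0 < f₁ N) (hf₂pos : ∀ N, 0 < f₂ N) (hζpos : ∀ N, 0 < ζ N)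
    (hf₁mono : ∀ m n, m ≤ n → f₁ n ≤ f₁ m) (hf₂mono : ∀ m n, m ≤ n → f₂ n ≤ f₂ m)
    (hζmono : ∀ m n, m ≤ n → ζ n ≤ ζ m)
    (hf₁lim : Filter.Tendsto f₁ Filter.atTop (nhds 0))
    (hf₂lim : Filter.Tendsto f₂ Filter.atTop (nhds 0))
    (hcompat₁ : ∃ K, ∀ N : ℕ, f₁ (N - N / 2) / f₂ N ≤ K)
    (C : ℝ)
    (hloc : ∀ k N : ℕ, k < N → ∀ x : X,
      ‖T (E k x) - E N (T (E k x))‖ ≤ C * ‖x‖ * (k : ℝ) ^ d * ζ (N - k))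
    (hcompat₂ : ∃ K, ∀ N : ℕ, (N : ℝ) ^ d * ζ (N / 2) / f₂ N ≤ K) :
    ∃ C' : ℝ, ∀ x : X,
      BddAbove (Set.range fun N => ‖x - E N x‖ / f₁ N) →
      BddAbove (Set.range fun N => ‖T x - E N (T x)‖ / f₂ N) ∧
      ‖T x‖ + (⨆ N : ℕ, ‖T x - E N (T x)‖ / f₂ N) ≤
        C' * (‖x‖ + ⨆ N : ℕ, ‖x - E N x‖ / f₁ N) :=
  stmt13_general d E hE T hT f₁ f₂ ζ hf₁pos hf₂pos hζpos hf₂mono hcompat₁ C hloc hcompat₂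
end
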